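/- arXiv:2407.08389 — 2 statements merged into one kernel-verified Lean document; each statement's English description precedes it below -/
import Mathlib

section
/- Let g : ℝ × ℝ → ℝ be continuous and satisfy: g(t,u) ≤ ν₁u + C₆ for u ≤ 0, g(t,u) ≥ μ₁u - C₆ for u ≥ 0, g(t,u) ≥ ν₂u - C₇ for u ≤ 0, and g(t,u) ≤ μ₂u + C₇ for u ≥ 0, with positive constants μ₁ ≤ μ₂, ν₁ ≤ ν₂, C₆, C₇. Then there exist functions ζ₁, ζ₂ with μ₁ ≤ ζ₁(t,u) ≤ μ₂ and ν₁ ≤ ζ₂(t,u) ≤ ν₂, and a bounded function h(t,u), such that g(t,u) = ζ₁(t,u)u⁺ - ζ₂(t,u)u⁻ + h(t,u) for all (t,u). -/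
/-- Fabry-type decomposition: a nonlinearity pinched between two asymmetric
linear growths can be written as `ζ₁ u⁺ - ζ₂ u⁻ + h` with `ζᵢ` pinched between
the corresponding constants and `h` bounded. -/
theorem fabry_decomposition
    (g : ℝ → ℝ → ℝ) (hg : Continuous fun p : ℝ × ℝ => g p.1 p.2)
    (μ₁ μ₂ ν₁ ν₂ C₆ C₇ : ℝ)
    (hμ₁ : 0 < μ₁) (hμ₂ : 0 < μ₂) (hν₁ : 0 < ν₁) (hν₂ : 0 < ν₂)
    (hC₆ : 0 < C₆) (hC₇ : 0 < C₇) (hμ : μ₁ ≤ μ₂) (hν : ν₁ ≤ ν₂)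
    (h1 : ∀ t u, u ≤ 0 → g t u ≤ ν₁ * u + C₆)
    (h2 : ∀ t u, 0 ≤ u → μ₁ * u - C₆ ≤ g t u)
    (h3 : ∀ t u, u ≤ 0 → ν₂ * u - C₇ ≤ g t u)
    (h4 : ∀ t u, 0 ≤ u → g t u ≤ μ₂ * u + C₇) :
    ∃ (ζ₁ ζ₂ h : ℝ → ℝ → ℝ) (C : ℝ),
      (∀ t u, ζ₁ t u ∈ Set.Icc μ₁ μ₂) ∧
      (∀ t u, ζ₂ t u ∈ Set.Icc ν₁ ν₂) ∧
      (∀ t u, |h t u| ≤ C) ∧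
      (∀ t u, g t u = ζ₁ t u * max u 0 - ζ₂ t u * max (-u) 0 + h t u) := by
  refine ⟨fun t u => max μ₁ (min μ₂ (g t u / u)),
         fun t u => max ν₁ (min ν₂ (g t u / u)),
         fun t u => g t u - (max μ₁ (min μ₂ (g t u / u))) * max u 0
            + (max ν₁ (min ν₂ (g t u / u))) * max (-u) 0,
         max C₆ C₇, ?_, ?_, ?_, ?_⟩
  · intro t u
    exact ⟨le_max_left _ _, max_le hμ (min_le_left _ _)⟩
  · intro t u
    exact ⟨le_max_left _ _, max_le hν (min_le_left _ _)⟩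
  · intro t u
    rcases lt_trichotomy u 0 with hu | hu | hu
    · have hmax1 : max u 0 = 0 := max_eq_right hu.le
      have hmax2 : max (-u) 0 = -u := max_eq_left (by linarith)
      have hg1 := h1 t u hu.le
      have hg3 := h3 t u hu.le
      simp only
      rw [hmax1, hmax2, mul_zero, sub_zero, abs_le]
      have hdiv : g t u / u * u = g t u := div_mul_cancel₀ _ hu.ne
      rcases le_total (g t u / u) ν₁ with hr | hr
      · -- g/u ≤ ν₁ : clamp = ν₁
        have : min ν₂ (g t u / u) ≤ ν₁ := le_trans (min_le_right _ _) hr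
        rw [max_eq_left this]
        have hge : ν₁ * u ≤ g t u := by
          have := (div_le_iff_of_neg hu).mp hr
          linarith
        constructor <;> nlinarith [le_max_left C₆ C₇, le_max_right C₆ C₇]
      · rcases le_total ν₂ (g t u / u) with hr2 | hr2
        · have hm : min ν₂ (g t u / u) = ν₂ := min_eq_left hr2
          rw [hm, max_eq_right hν]
          have hle : g t u ≤ ν₂ * u := by
            have := (le_div_iff_of_neg hu).mp hr2
            linarith
          constructor <;> nlinarith [le_max_left C₆ C₇, le_max_right C₆ C₇]
        · have hm : min ν₂ (g t u / u) = g t u / u := min_eq_right hr2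
          have hM : max ν₁ (g t u / u) = g t u / u := max_eq_right hr
          rw [hm, hM]
          have : g t u / u * -u = -g t u := by rw [mul_neg, hdiv]
          rw [this]
          constructor <;> nlinarith [le_max_left C₆ C₇, le_max_right C₆ C₇]
    · subst hu
      simp only [neg_zero, max_self, mul_zero, sub_zero, add_zero]
      have hg1 := h1 t 0 le_rfl
      have hg2 := h2 t 0 le_rfl
      rw [abs_le]
      constructor <;> nlinarith [le_max_left C₆ C₇]
    · have hmax1 : max u 0 = u := max_eq_left hu.le
      have hmax2 : max (-u) 0 = 0 := max_eq_right (by linarith)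
      have hg2 := h2 t u hu.le
      have hg4 := h4 t u hu.le
      simp only
      rw [hmax1, hmax2, mul_zero, add_zero, abs_le]
      have hdiv : g t u / u * u = g t u := div_mul_cancel₀ _ hu.ne'
      rcases le_total (g t u / u) μ₁ with hr | hr
      · have : min μ₂ (g t u / u) ≤ μ₁ := le_trans (min_le_right _ _) hr
        rw [max_eq_left this]
        have hle : g t u ≤ μ₁ * u := by
          have := (div_le_iff₀ hu).mp hr
          linarith
        constructor <;> nlinarith [le_max_left C₆ C₇, le_max_right C₆ C₇]
      · rcases le_total μ₂ (g t u / u) with hr2 | hr2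
        · have hm : min μ₂ (g t u / u) = μ₂ := min_eq_left hr2
          rw [hm, max_eq_right hμ]
          have hge : μ₂ * u ≤ g t u := by
            have := (le_div_iff₀ hu).mp hr2
            linarith
          constructor <;> nlinarith [le_max_left C₆ C₇, le_max_right C₆ C₇]
        · have hm : min μ₂ (g t u / u) = g t u / u := min_eq_right hr2
          have hM : max μ₁ (g t u / u) = g t u / u := max_eq_right hr
          rw [hm, hM, hdiv]
          constructor <;> nlinarith [le_max_left C₆ C₇, le_max_right C₆ C₇]
  · intro t u
    ring
end

section
/- Let 𝓗 : ℝ² → ℝ be positive, positively 2-homogeneous, and C¹, and suppose z : [a,b] → ℝ² \ {0} is a C¹ solution of Jż = α(t)∇𝓗₁(z) + (1-α(t))∇𝓗₂(z) with 0 ≤ α ≤ 1, where 𝓗₁ ≤ 𝓗₂ are both positive and positively 2-homogeneous. Writing z(t) = ρ(t)(cos θ(t), sin θ(t)) in polar coordinates, the angular velocity satisfies -θ̇(t) = 2α(t)𝓗₁(cos θ(t), sin θ(t)) + 2(1-α(t))𝓗₂(cos θ(t), sin θ(t)) for almost every t; in particular θ is strictly decreasing. -/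
open MeasureTheory

/-- The standard symplectic matrix `J` acting on ℝ². -/
noncomputable def Jmap (w : EuclideanSpace ℝ (Fin 2)) : EuclideanSpace ℝ (Fin 2) :=
  (WithLp.equiv 2 (Fin 2 → ℝ)).symm ![-(w 1), w 0]

/-- The unit-circle parametrization `θ ↦ (cos θ, sin θ)`. -/
noncomputable def uc (θ : ℝ) : EuclideanSpace ℝ (Fin 2) :=
  (WithLp.equiv 2 (Fin 2 → ℝ)).symm ![Real.cos θ, Real.sin θ]

/-!
Pairing the equation `J z' = α ∇H₁(z) + (1 - α) ∇H₂(z)` with the radial direction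
`u = (cos θ, sin θ)` isolates the angular velocity: the left side gives `-ρ θ'` because `J` is
skew and `⟪z', J u⟫ = ρ θ'`, while Euler's identity `⟪∇H(ρ u), ρ u⟫ = 2 H(ρ u) = 2 ρ² H(u)` turns
the right side into `2 ρ (α H₁(u) + (1 - α) H₂(u))`. Positivity of `H₁, H₂` then makes `θ' < 0`.
-/

open scoped InnerProductSpace

section Euler

variable {E : Type*} [NormedAddCommGroup E] [InnerProductSpace ℝ E] [CompleteSpace E]

theorem inner_gradient_self_of_homogeneous {H : E → ℝ} {w : E} {n : ℕ}
    (hdiff : DifferentiableAt ℝ H w) (hhom : ∀ l : ℝ, 0 < l → H (l • w) = l ^ n * H w) :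
    ⟪gradient H w, w⟫_ℝ = n * H w := by
  have hcomp : HasDerivAt (fun l : ℝ => H (l • w)) (fderiv ℝ H w w) 1 := by
    have hline : HasDerivAt (fun l : ℝ => l • w) w 1 := by
      simpa using (hasDerivAt_id (1 : ℝ)).smul_const w
    have hH : HasFDerivAt H (fderiv ℝ H w) ((1 : ℝ) • w) := by
      rw [one_smul]
      exact hdiff.hasFDerivAt
    exact hH.comp_hasDerivAt 1 hline
  have hpow : HasDerivAt (fun l : ℝ => H (l • w)) (n * H w) 1 := by
    have hmonomial : HasDerivAt (fun l : ℝ => l ^ n * H w) (n * H w) 1 := by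
      simpa using (hasDerivAt_pow n (1 : ℝ)).mul_const (H w)
    refine hmonomial.congr_of_eventuallyEq ?_
    filter_upwards [eventually_gt_nhds one_pos] with l hl using hhom l hl
  rw [gradient, InnerProductSpace.toDual_symm_apply]
  exact hcomp.unique hpow

theorem mul_inner_gradient_smul_of_homogeneous {H : E → ℝ} {u : E} {n : ℕ} {ρ : ℝ}
    (hρ : 0 < ρ) (hdiff : DifferentiableAt ℝ H (ρ • u))
    (hhom : ∀ l : ℝ, 0 < l → H (l • u) = l ^ n * H u) :
    ρ * ⟪gradient H (ρ • u), u⟫_ℝ = n * ρ ^ n * H u := by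
  have hhom' : ∀ l : ℝ, 0 < l → H (l • ρ • u) = l ^ n * H (ρ • u) := fun l hl => by
    rw [smul_smul, hhom _ (mul_pos hl hρ), hhom ρ hρ, mul_pow, mul_assoc]
  rw [← real_inner_smul_right, inner_gradient_self_of_homogeneous hdiff hhom', hhom ρ hρ,
    mul_assoc]

end Euler

@[simp] theorem Jmap_apply_zero (x : EuclideanSpace ℝ (Fin 2)) : Jmap x 0 = -x 1 := by
  simp [Jmap]

@[simp] theorem Jmap_apply_one (x : EuclideanSpace ℝ (Fin 2)) : Jmap x 1 = x 0 := by
  simp [Jmap]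

@[simp] theorem uc_apply_zero (φ : ℝ) : uc φ 0 = Real.cos φ := by
  simp [uc]

@[simp] theorem uc_apply_one (φ : ℝ) : uc φ 1 = Real.sin φ := by
  simp [uc]

theorem inner_fin_two (x y : EuclideanSpace ℝ (Fin 2)) :
    ⟪x, y⟫_ℝ = x 0 * y 0 + x 1 * y 1 := by
  simp [PiLp.inner_apply, Fin.sum_univ_two, mul_comm]

theorem Jmap_Jmap (x : EuclideanSpace ℝ (Fin 2)) : Jmap (Jmap x) = -x := by
  ext i
  fin_cases i <;> simp

theorem inner_Jmap_left (x y : EuclideanSpace ℝ (Fin 2)) :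
    ⟪Jmap x, y⟫_ℝ = -⟪x, Jmap y⟫_ℝ := by
  simp only [inner_fin_two, Jmap_apply_zero, Jmap_apply_one]
  ring

theorem inner_Jmap_self (x : EuclideanSpace ℝ (Fin 2)) : ⟪x, Jmap x⟫_ℝ = 0 := by
  simp only [inner_fin_two, Jmap_apply_zero, Jmap_apply_one]
  ring

theorem inner_uc_self (φ : ℝ) : ⟪uc φ, uc φ⟫_ℝ = 1 := by
  simp only [inner_fin_two, uc_apply_zero, uc_apply_one]
  linear_combination Real.cos_sq_add_sin_sq φ

theorem uc_ne_zero (φ : ℝ) : uc φ ≠ 0 := fun h => by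
  simpa [h] using inner_uc_self φ

theorem Jmap_uc (φ : ℝ) : Jmap (uc φ) = uc (φ + Real.pi / 2) := by
  ext i
  fin_cases i <;> simp [Real.cos_add_pi_div_two, Real.sin_add_pi_div_two]

theorem hasDerivAt_uc (φ : ℝ) : HasDerivAt uc (Jmap (uc φ)) φ := by
  have h := ((Real.hasDerivAt_cos φ).smul_const (EuclideanSpace.single (0 : Fin 2) (1 : ℝ))).add
    ((Real.hasDerivAt_sin φ).smul_const (EuclideanSpace.single (1 : Fin 2) (1 : ℝ)))
  refine (h.congr_of_eventuallyEq (Filter.Eventually.of_forall fun ψ => ?_)).congr_deriv ?_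
  · ext i
    fin_cases i <;> simp
  · ext i
    fin_cases i <;> simp

theorem hasDerivAt_Jmap_uc (φ : ℝ) : HasDerivAt (fun ψ => Jmap (uc ψ)) (-uc φ) φ := by
  simp_rw [Jmap_uc, ← Jmap_Jmap (uc φ), Jmap_uc φ]
  exact (hasDerivAt_uc _).comp_add_const φ _

/- Differentiating `⟪z, J u(θ)⟫ = 0`, rather than `z = ρ u(θ)`, avoids any regularity of `ρ`. -/
theorem inner_deriv_Jmap_uc_of_polar {z : ℝ → EuclideanSpace ℝ (Fin 2)} {ρ θ : ℝ → ℝ}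
    {z' : EuclideanSpace ℝ (Fin 2)} {θ' t : ℝ}
    (hpolar : ∀ᶠ s in nhds t, z s = ρ s • uc (θ s))
    (hz : HasDerivAt z z' t) (hθ : HasDerivAt θ θ' t) :
    ⟪z', Jmap (uc (θ t))⟫_ℝ = θ' * ρ t := by
  have hderiv : HasDerivAt (fun s => ⟪z s, Jmap (uc (θ s))⟫_ℝ)
      (⟪z t, θ' • -uc (θ t)⟫_ℝ + ⟪z', Jmap (uc (θ t))⟫_ℝ) t :=
    hz.inner ℝ ((hasDerivAt_Jmap_uc (θ t)).scomp t hθ)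
  have hzero : (fun s => ⟪z s, Jmap (uc (θ s))⟫_ℝ) =ᶠ[nhds t] fun _ => 0 := by
    filter_upwards [hpolar] with s hs
    rw [hs, real_inner_smul_left, inner_Jmap_self, mul_zero]
  have hsum := (hderiv.congr_of_eventuallyEq hzero.symm).unique (hasDerivAt_const t 0)
  rw [hpolar.self_of_nhds, smul_neg, inner_neg_right, real_inner_smul_left,
    real_inner_smul_right, inner_uc_self] at hsum
  linarith

theorem neg_angular_velocity_eq {H₁ H₂ : EuclideanSpace ℝ (Fin 2) → ℝ}
    {z : ℝ → EuclideanSpace ℝ (Fin 2)} {ρ θ : ℝ → ℝ} {z' : EuclideanSpace ℝ (Fin 2)}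
    {α θ' t : ℝ}
    (hd₁ : DifferentiableAt ℝ H₁ (z t)) (hd₂ : DifferentiableAt ℝ H₂ (z t))
    (hhom₁ : ∀ l : ℝ, 0 < l → H₁ (l • uc (θ t)) = l ^ 2 * H₁ (uc (θ t)))
    (hhom₂ : ∀ l : ℝ, 0 < l → H₂ (l • uc (θ t)) = l ^ 2 * H₂ (uc (θ t)))
    (hz : HasDerivAt z z' t) (hθ : HasDerivAt θ θ' t)
    (hODE : Jmap z' = α • gradient H₁ (z t) + (1 - α) • gradient H₂ (z t))
    (hρ : 0 < ρ t) (hpolar : ∀ᶠ s in nhds t, z s = ρ s • uc (θ s)) :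
    -θ' = 2 * α * H₁ (uc (θ t)) + 2 * (1 - α) * H₂ (uc (θ t)) := by
  set u := uc (θ t)
  have hzt : z t = ρ t • u := hpolar.self_of_nhds
  rw [hzt] at hd₁ hd₂ hODE
  have hpair : ρ t * ⟪Jmap z', u⟫_ℝ = -(θ' * ρ t ^ 2) := by
    rw [inner_Jmap_left, inner_deriv_Jmap_uc_of_polar hpolar hz hθ]
    ring
  have hgrad₁ := mul_inner_gradient_smul_of_homogeneous hρ hd₁ hhom₁
  have hgrad₂ := mul_inner_gradient_smul_of_homogeneous hρ hd₂ hhom₂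
  rw [hODE, inner_add_left, real_inner_smul_left, real_inner_smul_left] at hpair
  have hρ2 : ρ t ^ 2 ≠ 0 := pow_ne_zero 2 hρ.ne'
  apply mul_right_cancel₀ hρ2
  push_cast at hgrad₁ hgrad₂
  linear_combination -hpair + α * hgrad₁ + (1 - α) * hgrad₂

theorem angular_velocity_general
    (H₁ H₂ : EuclideanSpace ℝ (Fin 2) → ℝ)
    (hC1₁ : ContDiff ℝ 1 H₁) (hC1₂ : ContDiff ℝ 1 H₂)
    (hhom₁ : ∀ w : EuclideanSpace ℝ (Fin 2), w ≠ 0 → ∀ lam : ℝ, 0 < lam →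
      0 < H₁ (lam • w) ∧ H₁ (lam • w) = lam ^ 2 * H₁ w)
    (hhom₂ : ∀ w : EuclideanSpace ℝ (Fin 2), w ≠ 0 → ∀ lam : ℝ, 0 < lam →
      0 < H₂ (lam • w) ∧ H₂ (lam • w) = lam ^ 2 * H₂ w)
    (a b : ℝ)
    (z z' : ℝ → EuclideanSpace ℝ (Fin 2))
    (α : ℝ → ℝ) (hα : ∀ t, α t ∈ Set.Icc (0 : ℝ) 1)
    (hz : ∀ t ∈ Set.Icc a b, HasDerivAt z (z' t) t)
    (hODE : ∀ t ∈ Set.Icc a b,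
      Jmap (z' t) = α t • gradient H₁ (z t) + (1 - α t) • gradient H₂ (z t))
    (ρ θ θ' : ℝ → ℝ)
    (hρpos : ∀ t ∈ Set.Icc a b, 0 < ρ t)
    (hpolar : ∀ t ∈ Set.Icc a b, z t = ρ t • uc (θ t))
    (hθ : ∀ t ∈ Set.Icc a b, HasDerivAt θ (θ' t) t) :
    (∀ᵐ t ∂(volume.restrict (Set.Icc a b)),
      -θ' t = 2 * α t * H₁ (uc (θ t)) + 2 * (1 - α t) * H₂ (uc (θ t))) ∧
    StrictAntiOn θ (Set.Icc a b) := by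
  have key : ∀ t ∈ Set.Ioo a b,
      -θ' t = 2 * α t * H₁ (uc (θ t)) + 2 * (1 - α t) * H₂ (uc (θ t)) := fun t ht =>
    have htI := Set.Ioo_subset_Icc_self ht
    neg_angular_velocity_eq (hC1₁.differentiable one_ne_zero _)
      (hC1₂.differentiable one_ne_zero _) (fun l hl => (hhom₁ _ (uc_ne_zero _) l hl).2)
      (fun l hl => (hhom₂ _ (uc_ne_zero _) l hl).2) (hz t htI) (hθ t htI) (hODE t htI)
      (hρpos t htI) (Filter.eventually_of_mem (Icc_mem_nhds ht.1 ht.2) hpolar)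
  refine ⟨?_, ?_⟩
  · rw [← Measure.restrict_congr_set Ioo_ae_eq_Icc]
    exact Filter.eventually_of_mem (self_mem_ae_restrict measurableSet_Ioo) key
  · refine strictAntiOn_of_deriv_neg (convex_Icc a b)
      (fun t ht => (hθ t ht).continuousAt.continuousWithinAt) fun t ht => ?_
    rw [interior_Icc] at ht
    have h₁ := (hhom₁ (uc (θ t)) (uc_ne_zero _) 1 one_pos).1
    have h₂ := (hhom₂ (uc (θ t)) (uc_ne_zero _) 1 one_pos).1
    rw [one_smul] at h₁ h₂
    obtain ⟨hα₀, hα₁⟩ := hα t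
    rw [(hθ t (Set.Ioo_subset_Icc_self ht)).deriv]
    nlinarith [key t ht, mul_nonneg hα₀ h₁.le, mul_nonneg (sub_nonneg.2 hα₁) h₂.le]

/-- Angular velocity identity in polar coordinates for solutions of the
convex-combination system; in particular the angle is strictly decreasing. -/
theorem angular_velocity
    (H₁ H₂ : EuclideanSpace ℝ (Fin 2) → ℝ)
    (hC1₁ : ContDiff ℝ 1 H₁) (hC1₂ : ContDiff ℝ 1 H₂)
    (hhom₁ : ∀ w : EuclideanSpace ℝ (Fin 2), w ≠ 0 → ∀ lam : ℝ, 0 < lam →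
      0 < H₁ (lam • w) ∧ H₁ (lam • w) = lam ^ 2 * H₁ w)
    (hhom₂ : ∀ w : EuclideanSpace ℝ (Fin 2), w ≠ 0 → ∀ lam : ℝ, 0 < lam →
      0 < H₂ (lam • w) ∧ H₂ (lam • w) = lam ^ 2 * H₂ w)
    (hle : ∀ w, H₁ w ≤ H₂ w)
    (a b : ℝ) (hab : a < b)
    (z z' : ℝ → EuclideanSpace ℝ (Fin 2))
    (α : ℝ → ℝ) (hα : ∀ t, α t ∈ Set.Icc (0 : ℝ) 1)
    (hz : ∀ t ∈ Set.Icc a b, HasDerivAt z (z' t) t)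
    (hz0 : ∀ t ∈ Set.Icc a b, z t ≠ 0)
    (hODE : ∀ t ∈ Set.Icc a b,
      Jmap (z' t) = α t • gradient H₁ (z t) + (1 - α t) • gradient H₂ (z t))
    (ρ θ θ' : ℝ → ℝ)
    (hρpos : ∀ t ∈ Set.Icc a b, 0 < ρ t)
    (hpolar : ∀ t ∈ Set.Icc a b, z t = ρ t • uc (θ t))
    (hθ : ∀ t ∈ Set.Icc a b, HasDerivAt θ (θ' t) t) :
    (∀ᵐ t ∂(volume.restrict (Set.Icc a b)),
      -θ' t = 2 * α t * H₁ (uc (θ t)) + 2 * (1 - α t) * H₂ (uc (θ t))) ∧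
    StrictAntiOn θ (Set.Icc a b) :=
  angular_velocity_general H₁ H₂ hC1₁ hC1₂ hhom₁ hhom₂ a b z z' α hα hz hODE ρ θ θ' hρpos hpolar hθ
end
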